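/- arXiv:2502.06325 — 3 statements merged into one kernel-verified Lean document; each statement's English description precedes it below -/
import Mathlib

section
/- Let r > 0, α ∈ {0, 1/2}, c = sin(π/8), and let f be a continuous function on the closed sector {z ∈ ℂ : |arg z| ≤ π/8, |z| ≤ r} that is bounded by a constant B. Suppose f is analytic on the interior. Then |∫₀^r e^{iy} y^(-α) f(y) dy| ≤ B·∫₀^∞ e^(-cy) y^(-α) dy + B·r^(1-α)·∫₀^(π/8) e^(-2rθ/π) dθ, and the right-hand side is at most B·(Γ(1-α)/c^(1-α) + (π/2)·r^(-α)). -/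
open Real Complex MeasureTheory Set Filter Topology intervalIntegral

lemma abs_arg_polar {s t : ℝ} (hs : 0 < s) (ht0 : 0 ≤ t) (ht : t ≤ π/8) :
    ‖(s:ℂ) * Complex.exp ((t:ℂ) * I)‖ = s ∧
      Complex.arg ((s:ℂ) * Complex.exp ((t:ℂ) * I)) = t ∧
      0 < ((s:ℂ) * Complex.exp ((t:ℂ) * I)).re := by
  have hπ := Real.pi_pos
  have hc : 0 < Real.cos t :=
    Real.cos_pos_of_mem_Ioo ⟨by linarith, by linarith⟩
  refine ⟨?_, ?_, ?_⟩
  · simp [Complex.norm_exp, abs_of_pos hs]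
  · rw [Complex.exp_mul_I, Complex.arg_real_mul _ hs]
    exact Complex.arg_cos_add_sin_mul_I ⟨by linarith, by linarith⟩
  · have : ((s:ℂ) * Complex.exp ((t:ℂ) * I)).re = s * Real.cos t := by
      simp [Complex.mul_re, Complex.exp_ofReal_mul_I_re, Complex.exp_ofReal_mul_I_im]
    rw [this]; exact mul_pos hs hc

theorem contour_estimate (r α B : ℝ) (hr : 0 < r) (hα : α = 0 ∨ α = 1/2) (hB : 0 ≤ B)
    (c : ℝ) (hc : c = Real.sin (π/8)) (f : ℂ → ℂ)
    (hcont : ContinuousOn f {z : ℂ | ‖z‖ ≤ r ∧ |Complex.arg z| ≤ π/8})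
    (hbound : ∀ z, ‖z‖ ≤ r → |Complex.arg z| ≤ π/8 → ‖f z‖ ≤ B)
    (hanal : DifferentiableOn ℂ f (interior {z : ℂ | ‖z‖ ≤ r ∧ |Complex.arg z| ≤ π/8})) :
    ‖∫ y in (0:ℝ)..r, Complex.exp (Complex.I * y) * ((y : ℝ) ^ (-α) : ℝ) * f y‖ ≤
        B * (∫ y in Set.Ioi (0:ℝ), Real.exp (-c * y) * y ^ (-α)) +
          B * r ^ (1 - α) * ∫ θ in (0:ℝ)..(π/8), Real.exp (-2 * r * θ / π) ∧
      B * (∫ y in Set.Ioi (0:ℝ), Real.exp (-c * y) * y ^ (-α)) +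
          B * r ^ (1 - α) * (∫ θ in (0:ℝ)..(π/8), Real.exp (-2 * r * θ / π)) ≤
        B * (Real.Gamma (1 - α) / c ^ (1 - α) + (π/2) * r ^ (-α)) := by
  have hπ := Real.pi_pos
  have hα0 : 0 ≤ α := by rcases hα with h|h <;> norm_num [h]
  have hα1 : α < 1 := by rcases hα with h|h <;> norm_num [h]
  have hc0 : 0 < c := by
    rw [hc]; exact Real.sin_pos_of_pos_of_lt_pi (by linarith) (by linarith)
  set S : Set ℂ := {z : ℂ | ‖z‖ ≤ r ∧ |Complex.arg z| ≤ π/8} with hS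
  set G : ℂ → ℂ := fun z => Complex.exp (I * z) * z ^ (-α : ℂ) * f z with hGdef
  set u : ℂ := Complex.exp (((π/8 : ℝ) : ℂ) * I) with hu
  -- membership facts
  have hmem : ∀ s t : ℝ, 0 < s → s ≤ r → 0 ≤ t → t ≤ π/8 →
      ((s:ℂ) * Complex.exp ((t:ℂ) * I)) ∈ S := by
    intro s t hs hsr ht0 ht
    obtain ⟨h1, h2, _⟩ := abs_arg_polar hs ht0 ht
    exact ⟨by rw [h1]; exact hsr, by rw [h2, _root_.abs_of_nonneg ht0]; exact ht⟩
  -- pointwise bound on G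
  have hGb : ∀ s t : ℝ, 0 < s → s ≤ r → 0 ≤ t → t ≤ π/8 →
      ‖G ((s:ℂ) * Complex.exp ((t:ℂ) * I))‖ ≤
        Real.exp (-(s * Real.sin t)) * s ^ (-α) * B := by
    intro s t hs hsr ht0 ht
    obtain ⟨h1, h2, _⟩ := abs_arg_polar hs ht0 ht
    set z : ℂ := (s:ℂ) * Complex.exp ((t:ℂ) * I) with hz
    have hz0 : z ≠ 0 := by
      intro h; rw [h] at h1; simp at h1; exact hs.ne' h1.symm
    have him : z.im = s * Real.sin t := by
      simp [hz, Complex.mul_im, Complex.exp_ofReal_mul_I_re, Complex.exp_ofReal_mul_I_im]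
    have hre : (I * z).re = -(s * Real.sin t) := by
      simp [Complex.mul_re, him]
    rw [hGdef]
    simp only []
    rw [norm_mul, norm_mul, Complex.norm_exp, Complex.norm_cpow_of_ne_zero hz0, hre]
    have : ‖z‖ ^ (-(α:ℂ)).re / Real.exp (z.arg * (-(α:ℂ)).im) = s ^ (-α) := by
      simp [h1]
    rw [this]
    have hfz : ‖f z‖ ≤ B := hbound z (by rw [h1]; exact hsr)
      (by rw [h2, _root_.abs_of_nonneg ht0]; exact ht)
    have hs' : (0:ℝ) ≤ s ^ (-α) := Real.rpow_nonneg hs.le _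
    exact mul_le_mul_of_nonneg_left hfz (by positivity)
  -- continuity of G on the punctured sector
  have hGcont : ContinuousOn G {z | 0 < z.re ∧ z ∈ S} := by
    refine ContinuousOn.mul (ContinuousOn.mul ?_ ?_) (hcont.mono fun z hz => hz.2)
    · exact (Complex.continuous_exp.comp (continuous_const.mul continuous_id)).continuousOn
    · exact ContinuousOn.cpow continuousOn_id continuousOn_const fun z hz => Or.inl hz.1
  -- differentiability on the open sector
  have hGdiff : ∀ z : ℂ, 0 < z.re → ‖z‖ < r → |Complex.arg z| < π/8 →
      DifferentiableAt ℂ G z := by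
    intro z h1 h2 h3
    have hUopen : IsOpen {w : ℂ | 0 < w.re ∧ ‖w‖ < r ∧ |Complex.arg w| < π/8} := by
      rw [isOpen_iff_mem_nhds]
      intro w hw
      have e1 : {v : ℂ | 0 < v.re} ∈ 𝓝 w :=
        (Complex.continuous_re.continuousAt).preimage_mem_nhds (Ioi_mem_nhds hw.1)
      have e2 : {v : ℂ | ‖v‖ < r} ∈ 𝓝 w :=
        (continuous_norm.continuousAt).preimage_mem_nhds (Iio_mem_nhds hw.2.1)
      have e3 : {v : ℂ | |Complex.arg v| < π/8} ∈ 𝓝 w :=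
        ((Complex.continuousAt_arg (Or.inl hw.1)).abs).preimage_mem_nhds (Iio_mem_nhds hw.2.2)
      refine mem_of_superset (inter_mem (inter_mem e1 e2) e3) ?_
      rintro v ⟨⟨a, b⟩, cc⟩
      exact ⟨a, b, cc⟩
    have hzU : z ∈ interior S := by
      have hsub : {w : ℂ | 0 < w.re ∧ ‖w‖ < r ∧ |Complex.arg w| < π/8} ⊆ S :=
        fun w hw => ⟨hw.2.1.le, hw.2.2.le⟩
      exact interior_maximal hsub hUopen ⟨h1, h2, h3⟩
    have hf' : DifferentiableAt ℂ f z := hanal.differentiableAt (isOpen_interior.mem_nhds hzU)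
    exact (((differentiableAt_const I).mul differentiableAt_id).cexp.mul
      (differentiableAt_id.cpow (differentiableAt_const _) (Or.inl h1))).mul hf' 
  -- the contour identity at level ε
  have key : ∀ ε : ℝ, 0 < ε → ε < r →
      (∫ y in ε..r, G y) =
        u * (∫ y in ε..r, G (y * u)) -
          I * (∫ t in (0:ℝ)..(π/8), G ((r:ℂ) * Complex.exp ((t:ℂ) * I)) * ((r:ℂ) * Complex.exp ((t:ℂ) * I))) +
          I * (∫ t in (0:ℝ)..(π/8), G ((ε:ℂ) * Complex.exp ((t:ℂ) * I)) * ((ε:ℂ) * Complex.exp ((t:ℂ) * I))) := by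
    intro ε hε hεr
    set a := Real.log ε with ha
    set b := Real.log r with hb
    have hab : a ≤ b := Real.log_le_log hε hεr.le
    have hea : Real.exp a = ε := Real.exp_log hε
    have heb : Real.exp b = r := Real.exp_log hr
    set F : ℂ → ℂ := fun w => G (Complex.exp w) * Complex.exp w with hF
    have hexpw : ∀ w : ℂ, Complex.exp w = ((Real.exp w.re : ℝ) : ℂ) * Complex.exp ((w.im:ℂ) * I) := by
      intro w
      conv_lhs => rw [← Complex.re_add_im w]
      rw [Complex.exp_add, Complex.ofReal_exp]
    -- continuity of F on the closed rectangle
    have Hc : ContinuousOn F (Set.uIcc a b ×ℂ Set.uIcc 0 (π/8)) := by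
      have hmaps : Set.MapsTo Complex.exp (Set.uIcc a b ×ℂ Set.uIcc 0 (π/8)) {z : ℂ | 0 < z.re ∧ z ∈ S} := by
        intro w hw
        rw [Complex.mem_reProdIm, Set.uIcc_of_le hab, Set.uIcc_of_le (by positivity : (0:ℝ) ≤ π/8)] at hw
        have hs : 0 < Real.exp w.re := Real.exp_pos _
        have hsr : Real.exp w.re ≤ r := by rw [← heb]; exact Real.exp_le_exp.mpr hw.1.2
        obtain ⟨q1, q2, q3⟩ := abs_arg_polar hs hw.2.1 hw.2.2
        rw [hexpw w]
        exact ⟨q3, hmem _ _ hs hsr hw.2.1 hw.2.2⟩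
      exact ((hGcont.comp Complex.continuous_exp.continuousOn hmaps).mul
        Complex.continuous_exp.continuousOn)
    -- differentiability of F on the open rectangle
    have Hd : DifferentiableOn ℂ F
        (Ioo (min a b) (max a b) ×ℂ Ioo (min 0 (π/8)) (max 0 (π/8))) := by
      rw [min_eq_left hab, max_eq_right hab, min_eq_left (by positivity : (0:ℝ) ≤ π/8),
        max_eq_right (by positivity : (0:ℝ) ≤ π/8)]
      intro w hw
      rw [Complex.mem_reProdIm] at hw
      have hs : 0 < Real.exp w.re := Real.exp_pos _
      have hsr : Real.exp w.re < r := by rw [← heb]; exact Real.exp_lt_exp.mpr hw.1.2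
      obtain ⟨q1, q2, q3⟩ := abs_arg_polar hs hw.2.1.le (le_of_lt hw.2.2)
      have hdG : DifferentiableAt ℂ G (Complex.exp w) := by
        apply hGdiff
        · rw [hexpw w]; exact q3
        · rw [hexpw w, q1]; exact hsr
        · rw [hexpw w, q2, _root_.abs_of_nonneg hw.2.1.le]; exact hw.2.2
      exact (((hdG.comp w Complex.differentiable_exp.differentiableAt).mul
        Complex.differentiable_exp.differentiableAt)).differentiableWithinAt
    have H := Complex.integral_boundary_rect_eq_zero_of_continuousOn_of_differentiableOn
      F ⟨a, 0⟩ ⟨b, π/8⟩ Hc Hd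
    have H' : (∫ x : ℝ in a..b, F (↑x + ((0:ℝ):ℂ) * I)) -
        (∫ x : ℝ in a..b, F (↑x + ((π/8 : ℝ):ℂ) * I)) +
        I • (∫ t : ℝ in (0:ℝ)..(π/8), F (↑b + ((t:ℝ):ℂ) * I)) -
        I • (∫ t : ℝ in (0:ℝ)..(π/8), F (↑a + ((t:ℝ):ℂ) * I)) = 0 := H
    clear H
    -- substitution lemma for horizontal sides
    have hsubst : ∀ g : ℝ → ℂ, ContinuousOn g (Icc ε r) →
        (∫ x : ℝ in a..b, Real.exp x • g (Real.exp x)) = ∫ y in ε..r, g y := by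
      intro g hg
      have himg : Real.exp '' Set.uIcc a b ⊆ Icc ε r := by
        rintro - ⟨x, hx, rfl⟩
        rw [Set.uIcc_of_le hab] at hx
        exact ⟨by rw [← hea]; exact Real.exp_le_exp.mpr hx.1,
          by rw [← heb]; exact Real.exp_le_exp.mpr hx.2⟩
      have := intervalIntegral.integral_comp_smul_deriv'' (f := Real.exp) (f' := Real.exp)
        (g := g) (a := a) (b := b) Real.continuous_exp.continuousOn
        (fun x _ => (Real.hasDerivAt_exp x).hasDerivWithinAt)
        Real.continuous_exp.continuousOn (hg.mono himg)
      rw [hea, heb] at this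
      exact this
    -- bottom side
    have h1cont : ContinuousOn (fun y : ℝ => G ↑y) (Icc ε r) := by
      refine hGcont.comp Complex.continuous_ofReal.continuousOn fun y hy => ?_
      have hy0 : 0 < y := lt_of_lt_of_le hε hy.1
      refine ⟨by simpa using hy0, ?_, ?_⟩
      · simpa [Complex.norm_real, _root_.abs_of_pos hy0] using hy.2
      · rw [Complex.arg_ofReal_of_nonneg hy0.le]; simp; positivity
    have hbot : (∫ x : ℝ in a..b, F (↑x + ((0:ℝ):ℂ) * I)) = ∫ y in ε..r, G ↑y := by
      refine Eq.trans ?_ (hsubst (fun y : ℝ => G ↑y) h1cont)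
      refine intervalIntegral.integral_congr fun x _ => ?_
      show F (↑x + ((0:ℝ):ℂ) * I) = Real.exp x • G ↑(Real.exp x)
      rw [hF]
      simp only [Complex.ofReal_zero, zero_mul, add_zero]
      rw [← Complex.ofReal_exp, Complex.real_smul]
      ring
    -- top side
    have h2cont : ContinuousOn (fun y : ℝ => G (↑y * u) * u) (Icc ε r) := by
      refine ContinuousOn.mul ?_ continuousOn_const
      refine hGcont.comp ?_ fun y hy => ?_
      · exact (Complex.continuous_ofReal.mul continuous_const).continuousOn
      · have hy0 : 0 < y := lt_of_lt_of_le hε hy.1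
        obtain ⟨q1, q2, q3⟩ := abs_arg_polar hy0 (by positivity : (0:ℝ) ≤ π/8) le_rfl
        exact ⟨q3, hmem _ _ hy0 hy.2 (by positivity) le_rfl⟩
    have htop : (∫ x : ℝ in a..b, F (↑x + ((π/8 : ℝ):ℂ) * I)) =
        u * ∫ y in ε..r, G (↑y * u) := by
      have step : (∫ x : ℝ in a..b, F (↑x + ((π/8 : ℝ):ℂ) * I)) =
          ∫ y in ε..r, G (↑y * u) * u := by
        refine Eq.trans ?_ (hsubst (fun y : ℝ => G (↑y * u) * u) h2cont)
        refine intervalIntegral.integral_congr fun x _ => ?_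
        show F (↑x + ((π/8 : ℝ):ℂ) * I) = Real.exp x • (G (↑(Real.exp x) * u) * u)
        rw [hF]
        simp only []
        rw [Complex.exp_add, ← Complex.ofReal_exp, Complex.real_smul, ← hu]
        ring
      rw [step, intervalIntegral.integral_mul_const, mul_comm]
    -- right side
    have hright : (∫ t : ℝ in (0:ℝ)..(π/8), F (↑b + ((t:ℝ):ℂ) * I)) =
        ∫ t in (0:ℝ)..(π/8), G ((r:ℂ) * Complex.exp ((t:ℂ) * I)) * ((r:ℂ) * Complex.exp ((t:ℂ) * I)) := by
      refine intervalIntegral.integral_congr fun t _ => ?_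
      rw [hF]
      simp only []
      rw [Complex.exp_add, ← Complex.ofReal_exp, heb]
    -- left side
    have hleft : (∫ t : ℝ in (0:ℝ)..(π/8), F (↑a + ((t:ℝ):ℂ) * I)) =
        ∫ t in (0:ℝ)..(π/8), G ((ε:ℂ) * Complex.exp ((t:ℂ) * I)) * ((ε:ℂ) * Complex.exp ((t:ℂ) * I)) := by
      refine intervalIntegral.integral_congr fun t _ => ?_
      rw [hF]
      simp only []
      rw [Complex.exp_add, ← Complex.ofReal_exp, hea]
    rw [hbot, htop, hright, hleft, smul_eq_mul, smul_eq_mul] at H'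
    linear_combination H' 
  -- pointwise bounds on the real segment and rotated segment
  have hb0 : ∀ y ∈ Ioc (0:ℝ) r, ‖G ↑y‖ ≤ B * y ^ (-α) := by
    intro y hy
    have h := hGb y 0 hy.1 hy.2 le_rfl (by positivity)
    simp only [Complex.ofReal_zero, zero_mul, Complex.exp_zero, mul_one, Real.sin_zero,
      neg_zero, Real.exp_zero, one_mul] at h
    calc ‖G ↑y‖ ≤ y ^ (-α) * B := by simpa using h
      _ = B * y ^ (-α) := mul_comm _ _
  have hbu : ∀ y ∈ Ioc (0:ℝ) r, ‖G (↑y * u)‖ ≤ B * (Real.exp (-c*y) * y ^ (-α)) := by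
    intro y hy
    have h := hGb y (π/8) hy.1 hy.2 (by positivity) le_rfl
    rw [← hu] at h
    have hcy : -(y * Real.sin (π/8)) = -c*y := by rw [hc]; ring
    rw [hcy] at h
    calc ‖G (↑y * u)‖ ≤ Real.exp (-c*y) * y ^ (-α) * B := h
      _ = B * (Real.exp (-c*y) * y ^ (-α)) := by ring
  -- integrability auxiliary
  have hIntAux : ∀ h : ℝ → ℂ, ContinuousOn h (Ioc 0 r) →
      (∀ y ∈ Ioc (0:ℝ) r, ‖h y‖ ≤ B * y ^ (-α)) →
      IntervalIntegrable h volume 0 r := by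
    intro h hcon hbd
    rw [intervalIntegrable_iff_integrableOn_Ioc_of_le hr.le]
    have hg : IntegrableOn (fun y : ℝ => B * y ^ (-α)) (Ioc 0 r) := by
      have h1 : IntervalIntegrable (fun y : ℝ => B * y ^ (-α)) volume 0 r :=
        (intervalIntegrable_rpow' (by linarith)).const_mul B
      rwa [intervalIntegrable_iff_integrableOn_Ioc_of_le hr.le] at h1
    refine Integrable.mono' hg (hcon.aestronglyMeasurable measurableSet_Ioc) ?_
    refine (ae_restrict_iff' measurableSet_Ioc).mpr (Filter.Eventually.of_forall fun y hy => ?_)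
    simpa using hbd y hy
  have hcont0 : ContinuousOn (fun y : ℝ => G ↑y) (Ioc 0 r) := by
    refine hGcont.comp Complex.continuous_ofReal.continuousOn fun y hy => ?_
    refine ⟨by simpa using hy.1, ?_, ?_⟩
    · simpa [Complex.norm_real, _root_.abs_of_pos hy.1] using hy.2
    · rw [Complex.arg_ofReal_of_nonneg hy.1.le]; simp; positivity
  have hcontu : ContinuousOn (fun y : ℝ => G (↑y * u)) (Ioc 0 r) := by
    refine hGcont.comp ((Complex.continuous_ofReal.mul continuous_const).continuousOn)
      fun y hy => ?_
    obtain ⟨q1, q2, q3⟩ := abs_arg_polar hy.1 (by positivity : (0:ℝ) ≤ π/8) le_rfl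
    exact ⟨q3, hmem _ _ hy.1 hy.2 (by positivity) le_rfl⟩
  have hIntG : IntervalIntegrable (fun y : ℝ => G y) volume 0 r := hIntAux _ hcont0 hb0
  have hIntGu : IntervalIntegrable (fun y : ℝ => G (y * u)) volume 0 r := by
    refine hIntAux _ hcontu fun y hy => ?_
    refine (hbu y hy).trans ?_
    have h1 : Real.exp (-c*y) ≤ 1 := Real.exp_le_one_iff.mpr (by nlinarith [hy.1])
    have h2 : (0:ℝ) ≤ y ^ (-α) := Real.rpow_nonneg hy.1.le _
    exact mul_le_mul_of_nonneg_left (mul_le_of_le_one_left h2 h1) hB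
  -- limit ε → 0
  have hlim : (∫ y in (0:ℝ)..r, G y) =
        u * (∫ y in (0:ℝ)..r, G (y * u)) -
          I * (∫ t in (0:ℝ)..(π/8), G ((r:ℂ) * Complex.exp ((t:ℂ) * I)) * ((r:ℂ) * Complex.exp ((t:ℂ) * I))) := by
    have hIoo : ∀ᶠ ε in 𝓝[>] (0:ℝ), ε ∈ Ioo (0:ℝ) r := by
      have : Ioo (0:ℝ) r ∈ 𝓝[>] (0:ℝ) :=
        mem_nhdsWithin.mpr ⟨Iio r, isOpen_Iio, hr, fun x hx => ⟨hx.2, hx.1⟩⟩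
      exact this
    -- limit of left endpoint integrals
    have tendsto_prim : ∀ h : ℝ → ℂ, IntervalIntegrable h volume 0 r →
        Tendsto (fun ε => ∫ y in ε..r, h y) (𝓝[>] (0:ℝ)) (𝓝 (∫ y in (0:ℝ)..r, h y)) := by
      intro h hInt
      have hcp : ContinuousOn (fun x => ∫ t in (0:ℝ)..x, h t) (Set.uIcc 0 r) :=
        intervalIntegral.continuousOn_primitive_interval
          (by rwa [← intervalIntegrable_iff'] )
      have h0mem : (0:ℝ) ∈ Set.uIcc 0 r := Set.left_mem_uIcc
      have t0 : Tendsto (fun x => ∫ t in (0:ℝ)..x, h t) (𝓝[>] (0:ℝ))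
          (𝓝 (∫ t in (0:ℝ)..(0:ℝ), h t)) := by
        have := (hcp 0 h0mem).tendsto
        refine this.mono_left ?_
        rw [← nhdsWithin_Ioc_eq_nhdsGT hr]
        refine nhdsWithin_mono 0 ?_
        rw [Set.uIcc_of_le hr.le]
        exact Ioc_subset_Icc_self
      rw [intervalIntegral.integral_same] at t0
      have heq : ∀ᶠ ε in 𝓝[>] (0:ℝ),
          (∫ y in (0:ℝ)..r, h y) - (∫ y in (0:ℝ)..ε, h y) = ∫ y in ε..r, h y := by
        filter_upwards [hIoo] with ε hε
        have h2 : IntervalIntegrable h volume 0 ε :=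
          hInt.mono_set (Set.uIcc_subset_uIcc Set.left_mem_uIcc
            (by rw [Set.uIcc_of_le hr.le]; exact ⟨hε.1.le, hε.2.le⟩))
        rw [intervalIntegral.integral_interval_sub_left hInt h2]
      refine Tendsto.congr' heq ?_
      simpa using (tendsto_const_nhds (x := ∫ y in (0:ℝ)..r, h y)).sub t0
    have l1 := tendsto_prim _ hIntG
    have l2 := tendsto_prim _ hIntGu
    -- small arc tends to zero
    have l3 : Tendsto (fun ε : ℝ => ∫ t in (0:ℝ)..(π/8),
        G ((ε:ℂ) * Complex.exp ((t:ℂ) * I)) * ((ε:ℂ) * Complex.exp ((t:ℂ) * I)))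
        (𝓝[>] (0:ℝ)) (𝓝 0) := by
      have hbnd : ∀ᶠ ε : ℝ in 𝓝[>] (0:ℝ), ‖∫ t in (0:ℝ)..(π/8),
          G ((ε:ℂ) * Complex.exp ((t:ℂ) * I)) * ((ε:ℂ) * Complex.exp ((t:ℂ) * I))‖ ≤
            B * ε ^ (1-α) * (π/8) := by
        filter_upwards [hIoo] with ε hε
        have hC : ∀ t ∈ Set.uIoc (0:ℝ) (π/8), ‖G ((ε:ℂ) * Complex.exp ((t:ℂ) * I)) *
            ((ε:ℂ) * Complex.exp ((t:ℂ) * I))‖ ≤ B * ε ^ (1-α) := by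
          intro t ht
          rw [Set.uIoc_of_le (by positivity : (0:ℝ) ≤ π/8)] at ht
          obtain ⟨q1, q2, q3⟩ := abs_arg_polar hε.1 ht.1.le ht.2
          have hsin : 0 ≤ Real.sin t :=
            Real.sin_nonneg_of_nonneg_of_le_pi ht.1.le (by linarith [ht.2])
          have hexp1 : Real.exp (-(ε * Real.sin t)) ≤ 1 :=
            Real.exp_le_one_iff.mpr (by nlinarith [hε.1])
          have h := hGb ε t hε.1 hε.2.le ht.1.le ht.2
          rw [norm_mul, q1]
          have hpow : ε ^ (-α) * ε = ε ^ (1-α) := by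
            rw [show (1:ℝ)-α = -α + 1 by ring, Real.rpow_add hε.1, Real.rpow_one]
          have hfin : ‖G ((ε:ℂ) * Complex.exp ((t:ℂ) * I))‖ ≤ B * ε ^ (-α) := by
            refine h.trans ?_
            have h2 : (0:ℝ) ≤ ε ^ (-α) := Real.rpow_nonneg hε.1.le _
            calc Real.exp (-(ε * Real.sin t)) * ε ^ (-α) * B ≤ 1 * ε ^ (-α) * B :=
                  mul_le_mul_of_nonneg_right (mul_le_mul_of_nonneg_right hexp1 h2) hB
              _ = B * ε ^ (-α) := by ring
          calc ‖G ((ε:ℂ) * Complex.exp ((t:ℂ) * I))‖ * ε ≤ (B * ε ^ (-α)) * ε :=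
                mul_le_mul_of_nonneg_right hfin hε.1.le
            _ = B * ε ^ (1-α) := by rw [mul_assoc, hpow]
        have := intervalIntegral.norm_integral_le_of_norm_le_const hC
        refine this.trans ?_
        rw [sub_zero, _root_.abs_of_nonneg (by positivity : (0:ℝ) ≤ π/8)]
      have hzero : Tendsto (fun ε : ℝ => B * ε ^ (1-α) * (π/8)) (𝓝[>] (0:ℝ)) (𝓝 0) := by
        have h1 : Tendsto (fun ε : ℝ => ε ^ (1-α)) (𝓝 (0:ℝ)) (𝓝 ((0:ℝ) ^ (1-α))) :=
          (Real.continuousAt_rpow_const 0 (1-α) (Or.inr (by linarith))).tendsto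
        rw [Real.zero_rpow (by linarith : (1:ℝ)-α ≠ 0)] at h1
        have h2 : Tendsto (fun ε : ℝ => B * ε ^ (1-α) * (π/8)) (𝓝 (0:ℝ)) (𝓝 (B * 0 * (π/8))) :=
          (tendsto_const_nhds.mul h1).mul tendsto_const_nhds
        have := h2.mono_left (nhdsWithin_le_nhds : 𝓝[>] (0:ℝ) ≤ 𝓝 0)
        simpa using this
      exact squeeze_zero_norm' hbnd hzero
    -- conclude by uniqueness of limits
    have hRHS : Tendsto (fun ε : ℝ =>
        u * (∫ y in ε..r, G (y * u)) -
          I * (∫ t in (0:ℝ)..(π/8), G ((r:ℂ) * Complex.exp ((t:ℂ) * I)) * ((r:ℂ) * Complex.exp ((t:ℂ) * I))) +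
          I * (∫ t in (0:ℝ)..(π/8), G ((ε:ℂ) * Complex.exp ((t:ℂ) * I)) * ((ε:ℂ) * Complex.exp ((t:ℂ) * I))))
        (𝓝[>] (0:ℝ))
        (𝓝 (u * (∫ y in (0:ℝ)..r, G (y * u)) -
          I * (∫ t in (0:ℝ)..(π/8), G ((r:ℂ) * Complex.exp ((t:ℂ) * I)) * ((r:ℂ) * Complex.exp ((t:ℂ) * I))) + I * 0)) :=
      ((l2.const_mul u).sub tendsto_const_nhds).add (l3.const_mul I)
    have heq : ∀ᶠ ε : ℝ in 𝓝[>] (0:ℝ), (∫ y in ε..r, G y) =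
        u * (∫ y in ε..r, G (y * u)) -
          I * (∫ t in (0:ℝ)..(π/8), G ((r:ℂ) * Complex.exp ((t:ℂ) * I)) * ((r:ℂ) * Complex.exp ((t:ℂ) * I))) +
          I * (∫ t in (0:ℝ)..(π/8), G ((ε:ℂ) * Complex.exp ((t:ℂ) * I)) * ((ε:ℂ) * Complex.exp ((t:ℂ) * I))) := by
      filter_upwards [hIoo] with ε hε
      exact key ε hε.1 hε.2
    have := tendsto_nhds_unique (l1.congr' heq) hRHS
    rw [this]
    ring
  -- bounds on the two pieces
  have hIoi : IntegrableOn (fun y : ℝ => Real.exp (-c*y) * y ^ (-α)) (Ioi 0) volume := by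
    have h := integrableOn_rpow_mul_exp_neg_mul_rpow (by linarith : (-1:ℝ) < -α) one_pos hc0
    simp only [Real.rpow_one] at h
    exact h.congr_fun (fun x hx => mul_comm _ _) measurableSet_Ioi
  have hbound1 : ‖∫ y in (0:ℝ)..r, G (y * u)‖ ≤
      B * (∫ y in Set.Ioi (0:ℝ), Real.exp (-c * y) * y ^ (-α)) := by
    have step1 : ‖∫ y in (0:ℝ)..r, G (↑y * u)‖ ≤
        |∫ y in (0:ℝ)..r, B * (Real.exp (-c*y) * y ^ (-α))| := by
      refine intervalIntegral.norm_integral_le_abs_of_norm_le ?_ ?_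
      · rw [Set.uIoc_of_le hr.le]
        refine (ae_restrict_iff' measurableSet_Ioc).mpr (Filter.Eventually.of_forall
          fun y hy => ?_)
        simpa using hbu y hy
      · rw [intervalIntegrable_iff_integrableOn_Ioc_of_le hr.le]
        exact (hIoi.mono_set Ioc_subset_Ioi_self).const_mul B
    have step2 : |∫ y in (0:ℝ)..r, B * (Real.exp (-c*y) * y ^ (-α))| =
        ∫ y in (0:ℝ)..r, B * (Real.exp (-c*y) * y ^ (-α)) :=
      _root_.abs_of_nonneg (intervalIntegral.integral_nonneg hr.le fun y hy => mul_nonneg hB (mul_nonneg (Real.exp_nonneg _) (Real.rpow_nonneg hy.1 _)))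
    have step3 : (∫ y in (0:ℝ)..r, B * (Real.exp (-c*y) * y ^ (-α))) ≤
        B * ∫ y in Set.Ioi (0:ℝ), Real.exp (-c*y) * y ^ (-α) := by
      rw [intervalIntegral.integral_const_mul]
      refine mul_le_mul_of_nonneg_left ?_ hB
      rw [intervalIntegral.integral_of_le hr.le]
      refine setIntegral_mono_set hIoi ?_ (HasSubset.Subset.eventuallyLE Ioc_subset_Ioi_self)
      exact (ae_restrict_iff' measurableSet_Ioi).mpr (Filter.Eventually.of_forall
        fun y hy => mul_nonneg (Real.exp_nonneg _) (Real.rpow_nonneg (le_of_lt hy) _))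
    exact step1.trans (step2.trans_le step3)
  have hr1 : r ^ ((1:ℝ) - α) = r ^ (-α) * r := by
    rw [show (1:ℝ)-α = -α + 1 by ring, Real.rpow_add hr, Real.rpow_one]
  have hbound2 : ‖∫ t in (0:ℝ)..(π/8), G ((r:ℂ) * Complex.exp ((t:ℂ) * I)) * ((r:ℂ) * Complex.exp ((t:ℂ) * I))‖ ≤
      B * r ^ (1 - α) * ∫ θ in (0:ℝ)..(π/8), Real.exp (-2 * r * θ / π) := by
    have hgint : IntervalIntegrable (fun t : ℝ => B * r ^ ((1:ℝ)-α) * Real.exp (-2*r*t/π))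
        volume 0 (π/8) :=
      (continuous_const.mul (Real.continuous_exp.comp (by fun_prop))).intervalIntegrable _ _
    have step1 : ‖∫ t in (0:ℝ)..(π/8), G ((r:ℂ) * Complex.exp ((t:ℂ) * I)) * ((r:ℂ) * Complex.exp ((t:ℂ) * I))‖ ≤
        |∫ t in (0:ℝ)..(π/8), B * r ^ ((1:ℝ)-α) * Real.exp (-2*r*t/π)| := by
      refine intervalIntegral.norm_integral_le_abs_of_norm_le ?_ hgint
      rw [Set.uIoc_of_le (by positivity : (0:ℝ) ≤ π/8)]
      refine (ae_restrict_iff' measurableSet_Ioc).mpr (Filter.Eventually.of_forall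
        fun t ht => ?_)
      obtain ⟨q1, q2, q3⟩ := abs_arg_polar hr ht.1.le ht.2
      have h := hGb r t hr le_rfl ht.1.le ht.2
      have hsin : 2/π * t ≤ Real.sin t :=
        Real.mul_le_sin ht.1.le (ht.2.trans (by linarith : π/8 ≤ π/2))
      have h3 : Real.exp (-(r * Real.sin t)) ≤ Real.exp (-2*r*t/π) := by
        refine Real.exp_le_exp.mpr ?_
        rw [show -2*r*t/π = -(r*(2/π*t)) by ring]
        exact neg_le_neg (mul_le_mul_of_nonneg_left hsin hr.le)
      have hra : (0:ℝ) ≤ r ^ (-α) := Real.rpow_nonneg hr.le _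
      rw [norm_mul, q1]
      calc ‖G ((r:ℂ) * Complex.exp ((t:ℂ) * I))‖ * r ≤
            (Real.exp (-(r * Real.sin t)) * r ^ (-α) * B) * r :=
            mul_le_mul_of_nonneg_right h hr.le
        _ ≤ (Real.exp (-2*r*t/π) * r ^ (-α) * B) * r := by
            refine mul_le_mul_of_nonneg_right (mul_le_mul_of_nonneg_right
              (mul_le_mul_of_nonneg_right h3 hra) hB) hr.le
        _ = B * r ^ ((1:ℝ)-α) * Real.exp (-2*r*t/π) := by rw [hr1]; ring
    have step2 : |∫ t in (0:ℝ)..(π/8), B * r ^ ((1:ℝ)-α) * Real.exp (-2*r*t/π)| =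
        ∫ t in (0:ℝ)..(π/8), B * r ^ ((1:ℝ)-α) * Real.exp (-2*r*t/π) :=
      _root_.abs_of_nonneg (intervalIntegral.integral_nonneg (by positivity)
        fun t ht => by positivity)
    refine step1.trans ?_
    rw [step2, intervalIntegral.integral_const_mul]
  have habsu : ‖u‖ = 1 := by simp [hu, Complex.norm_exp]
  have hGeq : (∫ y in (0:ℝ)..r, Complex.exp (Complex.I * y) * ((y : ℝ) ^ (-α) : ℝ) * f y) =
      ∫ y in (0:ℝ)..r, G y := by
    refine intervalIntegral.integral_congr fun y hy => ?_
    rw [Set.uIcc_of_le hr.le] at hy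
    rw [hGdef]
    simp only []
    rw [Complex.ofReal_cpow hy.1]
    norm_num
  constructor
  · rw [hGeq, hlim]
    calc ‖u * (∫ y in (0:ℝ)..r, G (y * u)) - I * _‖ ≤
        ‖u * (∫ y in (0:ℝ)..r, G (y * u))‖ + ‖I * _‖ := by
          exact norm_sub_le _ _
      _ ≤ _ := by
          rw [norm_mul, norm_mul, habsu, Complex.norm_I, one_mul, one_mul]
          exact add_le_add hbound1 hbound2
  · have hGam : (∫ y in Set.Ioi (0:ℝ), Real.exp (-c * y) * y ^ (-α)) =
        Real.Gamma (1-α) / c ^ (1-α) := by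
      have hfe : (fun y : ℝ => Real.exp (-c*y) * y ^ (-α)) =
          fun y : ℝ => y ^ ((1-α)-1) * Real.exp (-(c*y)) := by
        funext y; rw [show (1:ℝ)-α-1 = -α by ring, neg_mul]; ring
      rw [hfe, integral_rpow_mul_exp_neg_mul_Ioi (by linarith) hc0, one_div,
        Real.inv_rpow hc0.le]
      ring
    have hExp : (∫ θ in (0:ℝ)..(π/8), Real.exp (-2*r*θ/π)) ≤ π/(2*r) := by
      have hd : ∀ θ ∈ Set.uIcc (0:ℝ) (π/8), HasDerivAt
          (fun t : ℝ => -(π/(2*r)) * Real.exp (-2*r*t/π)) (Real.exp (-2*r*θ/π)) θ := by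
        intro θ _
        have h1 : HasDerivAt (fun t : ℝ => -2*r*t/π) (-2*r/π) θ := by
          have := ((hasDerivAt_id θ).const_mul (-2*r)).div_const π
          simpa using this
        have h2 := (h1.exp).const_mul (-(π/(2*r)))
        refine h2.congr_deriv ?_
        symm
        field_simp
      have hval := intervalIntegral.integral_eq_sub_of_hasDerivAt hd
        ((Real.continuous_exp.comp (by fun_prop)).intervalIntegrable 0 (π/8))
      rw [hval]
      have hE1 : Real.exp (-2*r*0/π) = 1 := by norm_num
      have hE2 : 0 < Real.exp (-2*r*(π/8)/π) := Real.exp_pos _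
      have hK : 0 < π/(2*r) := by positivity
      rw [hE1]
      nlinarith [mul_pos hK hE2]
    have hIexp_nonneg : 0 ≤ ∫ θ in (0:ℝ)..(π/8), Real.exp (-2*r*θ/π) :=
      intervalIntegral.integral_nonneg (by positivity) fun t ht => (Real.exp_pos _).le
    rw [hGam]
    have hstep : B * r ^ (1-α) * (∫ θ in (0:ℝ)..(π/8), Real.exp (-2*r*θ/π)) ≤
        B * r ^ (1-α) * (π/(2*r)) :=
      mul_le_mul_of_nonneg_left hExp (by positivity)
    have heqn : B * r ^ ((1:ℝ)-α) * (π/(2*r)) = B * ((π/2) * r ^ (-α)) := by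
      rw [hr1]; field_simp
    calc B * (Real.Gamma (1-α) / c ^ (1-α)) +
          B * r ^ (1-α) * (∫ θ in (0:ℝ)..(π/8), Real.exp (-2*r*θ/π)) ≤
        B * (Real.Gamma (1-α) / c ^ (1-α)) + B * ((π/2) * r ^ (-α)) := by
          rw [← heqn]; exact add_le_add le_rfl hstep
      _ = B * (Real.Gamma (1-α) / c ^ (1-α) + (π/2) * r ^ (-α)) := by ring
end

section
/- Let V > 1, t ≥ (1+ε)·(ln V)/(d-1) for some ε > 0 and integer d ≥ 2, let γ ∈ (0,1], and suppose N: [0, 1-γ] → ℝ₊ satisfies N(u) ≤ V^(1-u+η) for all u ∈ [0, 1-γ], where η ≥ 0. Then (d-1)·t·∫_{-∞}^{1-γ} N(max(u,0))·e^{u(d-1)t} du ≤ V^(1+η) + ((d-1)t·V^(1+η)/((d-1)t - ln V))·(V^(γ-1)·e^((1-γ)(d-1)t) - 1), and this is at most (V^(γ+η)·(1+ε)/ε)·e^((1-γ)(d-1)t). -/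
open Real MeasureTheory

private lemma sx_hasDerivAt (T : ℝ) (hT : T ≠ 0) (x : ℝ) :
    HasDerivAt (fun y => Real.exp (y * T) / T) (Real.exp (x * T)) x := by
  have h1 : HasDerivAt (fun y : ℝ => y * T) T x := by
    simpa using (hasDerivAt_id x).mul_const T
  have h2 := (Real.hasDerivAt_exp (x * T)).comp x h1
  have h3 := h2.div_const T
  rw [mul_div_cancel_right₀ _ hT] at h3
  exact h3

private lemma sx_exp_mul_intervalIntegral (T a b : ℝ) (hT : T ≠ 0) :
    ∫ x in a..b, Real.exp (x * T) = (Real.exp (b * T) - Real.exp (a * T)) / T := by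
  rw [intervalIntegral.integral_eq_sub_of_hasDerivAt (fun x _ => sx_hasDerivAt T hT x)
    ((Real.continuous_exp.comp (continuous_id.mul continuous_const)).intervalIntegrable a b)]
  ring

private lemma sx_exp_mul_integrableOn_Iic (T b : ℝ) (hT : 0 < T) :
    IntegrableOn (fun x => Real.exp (x * T)) (Set.Iic b) := by
  refine integrableOn_Iic_of_intervalIntegral_norm_bounded (Real.exp (b * T) / T) b
    (fun i : ℝ => ((by fun_prop : Continuous fun x : ℝ => Real.exp (x * T)).integrableOn_Ioc))
    Filter.tendsto_id ?_
  filter_upwards [Filter.eventually_le_atBot b] with i hi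
  have hnorm : (∫ x in i..b, ‖Real.exp (x * T)‖) = ∫ x in i..b, Real.exp (x * T) := by
    apply intervalIntegral.integral_congr
    intro x _
    simp [abs_of_pos (Real.exp_pos _)]
  simp only [id_eq]
  rw [hnorm, sx_exp_mul_intervalIntegral T i b hT.ne']
  have h1 := Real.exp_pos (i * T)
  gcongr
  linarith

private lemma sx_exp_mul_integral_Iic (T b : ℝ) (hT : 0 < T) :
    ∫ x in Set.Iic b, Real.exp (x * T) = Real.exp (b * T) / T := by
  have h0 : Filter.Tendsto (fun y : ℝ => Real.exp (y * T) / T) Filter.atBot (nhds 0) := by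
    have := (Real.tendsto_exp_atBot.comp
      (Filter.Tendsto.atBot_mul_const hT Filter.tendsto_id)).div_const T
    simpa using this
  have := integral_Iic_of_hasDerivAt_of_tendsto' (a := b)
    (fun x _ => sx_hasDerivAt T hT.ne' x) (sx_exp_mul_integrableOn_Iic T b hT) h0
  simpa using this

private lemma sx_main_aux (T L A b X ε : ℝ) (hT : 0 < T) (hL : 0 < L) (hA : 0 < A)
    (hb : 0 ≤ b) (hε : 0 < ε) (h1 : (1 + ε) * L ≤ T)
    (hX : X = Real.exp (b * (T - L)))
    (f : ℝ → ℝ)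
    (hf : ∀ u ∈ Set.Iic b, f u ≤ A * Real.exp (u * T - max u 0 * L)) :
    T * (∫ u in Set.Iic b, f u) ≤ A + T * A / (T - L) * (X - 1) ∧
      A + T * A / (T - L) * (X - 1) ≤ A * (1 + ε) / ε * X := by
  have hTL : 0 < T - L := by nlinarith
  have hX1 : (1:ℝ) ≤ X := by
    rw [hX]; exact Real.one_le_exp (mul_nonneg hb hTL.le)
  set g : ℝ → ℝ := fun u => A * Real.exp (u * T - max u 0 * L) with hg
  have heq1 : Set.EqOn (fun u : ℝ => A * Real.exp (u * T)) g (Set.Iic 0) := by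
    intro u hu
    simp only [hg, max_eq_right (Set.mem_Iic.mp hu), mul_zero, zero_mul, sub_zero]
  have hg1 : IntegrableOn g (Set.Iic 0) := by
    have h' : IntegrableOn (fun x => A * Real.exp (x * T)) (Set.Iic 0) :=
      (sx_exp_mul_integrableOn_Iic T 0 hT).const_mul A
    exact h'.congr_fun heq1 measurableSet_Iic
  have hg2 : IntegrableOn g (Set.Ioc 0 b) := by
    apply Continuous.integrableOn_Ioc
    fun_prop
  have hunion : Set.Iic (0:ℝ) ∪ Set.Ioc 0 b = Set.Iic b := Set.Iic_union_Ioc_eq_Iic hb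
  have hdisj : Disjoint (Set.Iic (0:ℝ)) (Set.Ioc 0 b) :=
    (Set.Iic_disjoint_Ioi le_rfl).mono_right Set.Ioc_subset_Ioi_self
  have hg_int : IntegrableOn g (Set.Iic b) := by
    rw [← hunion]; exact hg1.union hg2
  have hgv1 : ∫ u in Set.Iic (0:ℝ), g u = A / T := by
    rw [← setIntegral_congr_fun measurableSet_Iic heq1, integral_const_mul,
      sx_exp_mul_integral_Iic T 0 hT, zero_mul, Real.exp_zero]
    ring
  have hgv2 : ∫ u in Set.Ioc (0:ℝ) b, g u = A * (X - 1) / (T - L) := by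
    have heq2 : Set.EqOn g (fun u : ℝ => A * Real.exp (u * (T - L))) (Set.Ioc 0 b) := by
      intro u hu
      simp only [hg, max_eq_left hu.1.le]
      congr 1
      ring
    rw [setIntegral_congr_fun measurableSet_Ioc heq2, ← intervalIntegral.integral_of_le hb,
      intervalIntegral.integral_const_mul, sx_exp_mul_intervalIntegral (T - L) 0 b hTL.ne',
      hX, zero_mul, Real.exp_zero]
    ring
  have hgv : ∫ u in Set.Iic b, g u = A / T + A * (X - 1) / (T - L) := by
    rw [← hunion, setIntegral_union hdisj measurableSet_Ioc hg1 hg2, hgv1, hgv2]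
  have hRHS : T * (A / T + A * (X - 1) / (T - L)) = A + T * A / (T - L) * (X - 1) := by
    field_simp
  have hc : T / (T - L) ≤ (1 + ε) / ε := by
    rw [div_le_div_iff₀ hTL hε]
    nlinarith
  have hc0 : 0 ≤ T / (T - L) := by positivity
  have hK1 : (1:ℝ) ≤ (1 + ε) / ε := by
    rw [le_div_iff₀ hε]; linarith
  constructor
  · by_cases hint : IntegrableOn f (Set.Iic b)
    · have hm := setIntegral_mono_on hint hg_int measurableSet_Iic hf
      calc T * (∫ u in Set.Iic b, f u) ≤ T * (∫ u in Set.Iic b, g u) :=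
            mul_le_mul_of_nonneg_left hm hT.le
        _ = A + T * A / (T - L) * (X - 1) := by rw [hgv, hRHS]
    · rw [integral_undef hint, mul_zero]
      have h2 : 0 ≤ T * A / (T - L) := by positivity
      nlinarith
  · have hgoal : A + (T / (T - L)) * A * (X - 1) ≤ A * ((1 + ε) / ε) * X := by
      nlinarith [mul_le_mul_of_nonneg_right hc (mul_nonneg hA.le (by linarith : (0:ℝ) ≤ X - 1)),
        mul_nonneg hA.le (by linarith : (0:ℝ) ≤ (1 + ε) / ε - 1)]
    calc A + T * A / (T - L) * (X - 1) = A + (T / (T - L)) * A * (X - 1) := by ring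
      _ ≤ A * ((1 + ε) / ε) * X := hgoal
      _ = A * (1 + ε) / ε * X := by ring

theorem sarnak_xue_integral_estimate (V t ε γ η : ℝ) (d : ℕ)
    (hV : 1 < V) (hε : 0 < ε) (hd : 2 ≤ d)
    (ht : (1 + ε) * Real.log V / ((d : ℝ) - 1) ≤ t)
    (hγ : γ ∈ Set.Ioc (0:ℝ) 1) (hη : 0 ≤ η)
    (N : ℝ → ℝ) (hN0 : ∀ u ∈ Set.Icc (0:ℝ) (1 - γ), 0 ≤ N u)
    (hN : ∀ u ∈ Set.Icc (0:ℝ) (1 - γ), N u ≤ V ^ (1 - u + η)) :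
    ((d : ℝ) - 1) * t * ∫ u in Set.Iic (1 - γ), N (max u 0) * Real.exp (u * ((d : ℝ) - 1) * t) ≤
        V ^ (1 + η) + (((d : ℝ) - 1) * t * V ^ (1 + η) / (((d : ℝ) - 1) * t - Real.log V)) *
          (V ^ (γ - 1) * Real.exp ((1 - γ) * ((d : ℝ) - 1) * t) - 1) ∧
      V ^ (1 + η) + (((d : ℝ) - 1) * t * V ^ (1 + η) / (((d : ℝ) - 1) * t - Real.log V)) *
          (V ^ (γ - 1) * Real.exp ((1 - γ) * ((d : ℝ) - 1) * t) - 1) ≤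
        (V ^ (γ + η) * (1 + ε) / ε) * Real.exp ((1 - γ) * ((d : ℝ) - 1) * t) := by
  have hV0 : (0:ℝ) < V := lt_trans one_pos hV
  have hL : 0 < Real.log V := Real.log_pos hV
  have hd1 : (1:ℝ) ≤ (d : ℝ) - 1 := by
    have : (2:ℝ) ≤ (d : ℝ) := by exact_mod_cast hd
    linarith
  have hDpos : (0:ℝ) < (d : ℝ) - 1 := by linarith
  have h1 : (1 + ε) * Real.log V ≤ ((d : ℝ) - 1) * t := by
    rw [div_le_iff₀ hDpos] at ht
    linarith
  have hT : 0 < ((d : ℝ) - 1) * t := lt_of_lt_of_le (by nlinarith) h1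
  have hb : 0 ≤ 1 - γ := by linarith [hγ.2]
  have hA : 0 < V ^ (1 + η) := Real.rpow_pos_of_pos hV0 _
  have hX : V ^ (γ - 1) * Real.exp ((1 - γ) * ((d : ℝ) - 1) * t) =
      Real.exp ((1 - γ) * (((d : ℝ) - 1) * t - Real.log V)) := by
    rw [Real.rpow_def_of_pos hV0, ← Real.exp_add]
    congr 1
    ring
  have hf : ∀ u ∈ Set.Iic (1 - γ),
      N (max u 0) * Real.exp (u * ((d : ℝ) - 1) * t) ≤
        V ^ (1 + η) * Real.exp (u * (((d : ℝ) - 1) * t) - max u 0 * Real.log V) := by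
    intro u hu
    have hm : max u 0 ∈ Set.Icc (0:ℝ) (1 - γ) := ⟨le_max_right _ _, max_le hu hb⟩
    calc N (max u 0) * Real.exp (u * ((d : ℝ) - 1) * t)
        ≤ V ^ (1 - max u 0 + η) * Real.exp (u * ((d : ℝ) - 1) * t) :=
          mul_le_mul_of_nonneg_right (hN _ hm) (Real.exp_pos _).le
      _ = V ^ (1 + η) * Real.exp (u * (((d : ℝ) - 1) * t) - max u 0 * Real.log V) := by
          rw [Real.rpow_def_of_pos hV0, Real.rpow_def_of_pos hV0, ← Real.exp_add, ← Real.exp_add]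
          congr 1
          ring
  obtain ⟨H1, H2⟩ := sx_main_aux (((d : ℝ) - 1) * t) (Real.log V) (V ^ (1 + η)) (1 - γ)
    (V ^ (γ - 1) * Real.exp ((1 - γ) * ((d : ℝ) - 1) * t)) ε hT hL hA hb hε h1 hX
    (fun u => N (max u 0) * Real.exp (u * ((d : ℝ) - 1) * t)) hf
  refine ⟨H1, ?_⟩
  have hAV : V ^ ((1:ℝ) + η) * V ^ (γ - 1) = V ^ (γ + η) := by
    rw [← Real.rpow_add hV0]
    congr 1
    ring
  have heq : V ^ ((1:ℝ) + η) * (1 + ε) / ε *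
      (V ^ (γ - 1) * Real.exp ((1 - γ) * ((d : ℝ) - 1) * t)) =
      V ^ (γ + η) * (1 + ε) / ε * Real.exp ((1 - γ) * ((d : ℝ) - 1) * t) := by
    linear_combination (Real.exp ((1 - γ) * ((d : ℝ) - 1) * t) * (1 + ε) / ε) * hAV
  linarith [H2, heq.le, heq.ge]
end

section
/- Let d ≥ 3 and t > 0, a = tanh t, and for s ∈ ℂ define I = ∫_{(0,1)^{d-1}} (cosh t + sinh t · ∏_{j=1}^{d-1} x_j)^{s} · (∏_{j=1}^{d-1} x_j^{d-1-j}) / (∏_{j=1}^{d-1} √(1 − x_j²)) dx. Then, provided Re(s) > −(d−1)/2, the change of variables y_j = x₁⋯x_j transforms I into ∫_𝒟 (cosh t + y_{d-1}·sinh t)^s · (∏_{j=1}^{d-2} y_j) / (∏_{j=1}^{d-1} √(y_{j-1}² − y_j²)) dy, where 𝒟 = {y : 1 > y₁ > y₂ > ⋯ > y_{d-1} > 0} and y₀ = 1. -/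
open Real MeasureTheory Finset

namespace CoVAux

variable {m : ℕ}

noncomputable def K (x : Fin m → ℝ) : Fin m → ℝ := fun j => ∏ i ∈ Finset.Iic j, x i

lemma Iic_fin_zero (h : 0 < m) : Finset.Iic (⟨0, h⟩ : Fin m) = {⟨0, h⟩} := by
  ext i
  simp only [Finset.mem_Iic, Finset.mem_singleton, Fin.le_def, Fin.ext_iff]
  omega

lemma Iic_fin_succ (p : ℕ) (hp : p + 1 < m) :
    Finset.Iic (⟨p + 1, hp⟩ : Fin m) = insert ⟨p + 1, hp⟩ (Finset.Iic ⟨p, by omega⟩) := by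
  ext i; simp [Fin.le_def, Fin.ext_iff]; omega

lemma K_zero (x : Fin m → ℝ) (h : 0 < m) : K x ⟨0, h⟩ = x ⟨0, h⟩ := by
  simp [K, Iic_fin_zero h]

lemma K_succ (x : Fin m → ℝ) (p : ℕ) (hp : p + 1 < m) :
    K x ⟨p + 1, hp⟩ = K x ⟨p, by omega⟩ * x ⟨p + 1, hp⟩ := by
  rw [K, Iic_fin_succ p hp, Finset.prod_insert (by simp [Fin.le_def]), mul_comm]
  rfl

lemma Iio_fin_zero (h : 0 < m) : Finset.Iio (⟨0, h⟩ : Fin m) = ∅ := by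
  ext i; simp [Fin.lt_def]

lemma Iio_fin_succ (p : ℕ) (hp : p + 1 < m) :
    Finset.Iio (⟨p + 1, hp⟩ : Fin m) = Finset.Iic (⟨p, by omega⟩ : Fin m) := by
  ext i; simp [Fin.lt_def, Fin.le_def]

/-- the "shifted" K, i.e. `y_{j-1}` with `y_{-1} = 1`. -/
noncomputable def A (x : Fin m → ℝ) (j : Fin m) : ℝ :=
  if h : (j : ℕ) = 0 then 1
  else K x ⟨(j : ℕ) - 1, Nat.lt_of_le_of_lt (Nat.sub_le _ _) j.isLt⟩

lemma prod_Iio_eq_A (x : Fin m → ℝ) (j : Fin m) : ∏ k ∈ Finset.Iio j, x k = A x j := by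
  obtain ⟨p, hp⟩ := j
  cases p with
  | zero => simp [Iio_fin_zero hp, A]
  | succ q => rw [Iio_fin_succ q hp]; simp [A, K]


def cube' (m : ℕ) : Set (Fin m → ℝ) := {x | ∀ j, x j ∈ Set.Ioo (0:ℝ) 1}

lemma K_pos {x : Fin m → ℝ} (hx : x ∈ cube' m) (j : Fin m) : 0 < K x j :=
  Finset.prod_pos fun i _ => (hx i).1

lemma K_lt_one {x : Fin m → ℝ} (hx : x ∈ cube' m) (j : Fin m) : K x j < 1 := by
  obtain ⟨p, hp⟩ := j
  induction p with
  | zero => rw [K_zero]; exact (hx _).2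
  | succ q ih =>
    rw [K_succ x q hp]
    have h1 : 0 < K x ⟨q, by omega⟩ := K_pos hx _
    have h2 := ih (by omega)
    have h3 := (hx ⟨q + 1, hp⟩).1
    have h4 := (hx ⟨q + 1, hp⟩).2
    nlinarith

lemma K_anti {x : Fin m → ℝ} (hx : x ∈ cube' m) {p q : ℕ} (hpq : p < q) (hq : q < m) :
    K x ⟨q, hq⟩ < K x ⟨p, by omega⟩ := by
  induction q with
  | zero => omega
  | succ r ih =>
    have hstep : K x ⟨r + 1, hq⟩ < K x ⟨r, by omega⟩ := by
      rw [K_succ x r hq]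
      exact mul_lt_of_lt_one_right (K_pos hx _) (hx ⟨r + 1, hq⟩).2
    rcases Nat.lt_or_ge p r with h | h
    · exact hstep.trans (ih h (by omega))
    · have : p = r := by omega
      subst this; exact hstep

lemma K_injOn : Set.InjOn (K (m := m)) (cube' m) := by
  intro x hx y hy h
  funext j
  obtain ⟨p, hp⟩ := j
  cases p with
  | zero =>
    have := congrFun h ⟨0, hp⟩
    rwa [K_zero, K_zero] at this
  | succ q =>
    have h1 := congrFun h ⟨q + 1, hp⟩
    have h2 := congrFun h ⟨q, by omega⟩
    rw [K_succ x q hp, K_succ y q hp, h2] at h1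
    exact mul_left_cancel₀ (ne_of_gt (K_pos hy ⟨q, by omega⟩)) h1

lemma K_image :
    K '' cube' m = {y : Fin m → ℝ |
      (∀ j, y j ∈ Set.Ioo (0:ℝ) 1) ∧ ∀ j k : Fin m, j < k → y k < y j} := by
  ext y
  constructor
  · rintro ⟨x, hx, rfl⟩
    refine ⟨fun j => ⟨K_pos hx j, K_lt_one hx j⟩, fun j k hjk => ?_⟩
    have : (j : ℕ) < (k : ℕ) := hjk
    simpa using K_anti hx this k.isLt
  · rintro ⟨h1, h2⟩
    refine ⟨fun j => if h : (j : ℕ) = 0 then y j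
      else y j / y ⟨(j : ℕ) - 1, Nat.lt_of_le_of_lt (Nat.sub_le _ _) j.isLt⟩, fun j => ?_, ?_⟩
    · obtain ⟨p, hp⟩ := j
      cases p with
      | zero => simpa using h1 ⟨0, hp⟩
      | succ q =>
        simp only [dif_neg (Nat.succ_ne_zero q)]
        have hlt : y ⟨q + 1, hp⟩ < y ⟨q, by omega⟩ := h2 _ _ (by simp [Fin.lt_def])
        have hpos : 0 < y ⟨q + 1, hp⟩ := (h1 _).1
        have hpos' : 0 < y ⟨q, by omega⟩ := (h1 _).1
        exact ⟨div_pos hpos hpos', (div_lt_one hpos').2 hlt⟩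
    · funext j
      obtain ⟨p, hp⟩ := j
      induction p with
      | zero => rw [K_zero]; simp
      | succ q ih =>
        rw [K_succ _ q hp, ih (by omega)]
        simp only [dif_neg (Nat.succ_ne_zero q), Nat.add_sub_cancel]
        rw [mul_comm, div_mul_cancel₀ _ (ne_of_gt (h1 ⟨q, by omega⟩).1)]


noncomputable def L (x : Fin m → ℝ) : (Fin m → ℝ) →L[ℝ] (Fin m → ℝ) :=
  ContinuousLinearMap.pi fun j => ∑ i ∈ Finset.Iic j,
    (∏ k ∈ (Finset.Iic j).erase i, x k) • ContinuousLinearMap.proj i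

lemma hasFDerivAt_K (x : Fin m → ℝ) : HasFDerivAt K (L x) x := by
  refine hasFDerivAt_pi'' fun j => ?_
  simp only [L, ContinuousLinearMap.proj_pi]
  exact HasFDerivAt.finset_prod fun i _ => hasFDerivAt_apply i x

lemma L_apply (x v : Fin m → ℝ) (j : Fin m) :
    L x v j = ∑ i ∈ Finset.Iic j, (∏ k ∈ (Finset.Iic j).erase i, x k) * v i := by
  simp [L]

lemma det_L (x : Fin m → ℝ) :
    (L x).det = ∏ j : Fin m, ∏ k ∈ Finset.Iio j, x k := by
  have hcoe : (L x).det = LinearMap.det ((L x : (Fin m → ℝ) →ₗ[ℝ] (Fin m → ℝ))) := rfl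
  rw [hcoe, ← LinearMap.det_toMatrix']
  have hentry : ∀ i j : Fin m, LinearMap.toMatrix' ((L x : (Fin m → ℝ) →ₗ[ℝ] (Fin m → ℝ))) i j =
      if j ≤ i then ∏ k ∈ (Finset.Iic i).erase j, x k else 0 := by
    intro i j
    rw [LinearMap.toMatrix'_apply]
    rw [show (Pi.single j (1:ℝ) : Fin m → ℝ) = fun j' => if j' = j then (1:ℝ) else 0 from by
      ext j'; simp [Pi.single_apply]]
    have : (L x) (fun j' => if j' = j then (1:ℝ) else 0) i =
        ∑ k ∈ Finset.Iic i, (∏ l ∈ (Finset.Iic i).erase k, x l) * (if k = j then 1 else 0) :=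
      L_apply x _ i
    rw [show ((L x : (Fin m → ℝ) →ₗ[ℝ] (Fin m → ℝ)) (fun j' => if j' = j then (1:ℝ) else 0) i)
        = (L x) (fun j' => if j' = j then (1:ℝ) else 0) i from rfl, this]
    simp only [mul_ite, mul_one, mul_zero]
    rw [Finset.sum_ite_eq' (Finset.Iic i)]
    simp [Finset.mem_Iic]
  rw [Matrix.det_of_lowerTriangular]
  · refine Finset.prod_congr rfl fun j _ => ?_
    rw [hentry j j, if_pos le_rfl, Finset.Iic_erase]
  · intro i j hij
    have hij' : i < j := hij
    rw [hentry i j, if_neg (not_le.2 hij')]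


/-- extension of `K` to `ℕ` indices. -/
noncomputable def KN (x : Fin m → ℝ) (p : ℕ) : ℝ := if h : p < m then K x ⟨p, h⟩ else 1

lemma prod_A_range (x : Fin m → ℝ) (hm : 0 < m) :
    ∏ j : Fin m, A x j = ∏ p ∈ Finset.range (m - 1), KN x p := by
  classical
  have h1 : ∏ p ∈ Finset.range m, (fun p => if p = 0 then (1:ℝ) else KN x (p - 1)) p
      = ∏ j : Fin m, A x j := by
    rw [Finset.prod_range]
    refine Finset.prod_congr rfl fun j _ => ?_
    by_cases h : (j : ℕ) = 0
    · simp [h, A]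
    · rw [if_neg h, A, dif_neg h, KN,
        dif_pos (Nat.lt_of_le_of_lt (Nat.sub_le _ _) j.isLt)]
  rw [← h1, show Finset.range m = Finset.range ((m - 1) + 1) by
      congr 1; omega,
    Finset.prod_range_succ']
  simp [Nat.add_sub_cancel]

lemma prod_if_range (x : Fin m → ℝ) (hm : 0 < m) :
    ∏ j : Fin m, (if (j : ℕ) < m - 1 then K x j else 1) = ∏ p ∈ Finset.range (m - 1), KN x p := by
  classical
  have h1 : ∏ p ∈ Finset.range m, (fun p => if p < m - 1 then KN x p else 1) p
      = ∏ j : Fin m, (if (j : ℕ) < m - 1 then K x j else 1) := by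
    rw [Finset.prod_range]
    refine Finset.prod_congr rfl fun j _ => ?_
    by_cases h : (j : ℕ) < m - 1
    · rw [if_pos h, if_pos h, KN, dif_pos j.isLt]
    · rw [if_neg h, if_neg h]
  rw [← h1, show Finset.range m = Finset.range ((m - 1) + 1) by
      congr 1; omega,
    Finset.prod_range_succ, if_neg (lt_irrefl _), mul_one]
  refine Finset.prod_congr rfl fun p hp => ?_
  rw [if_pos (Finset.mem_range.1 hp)]

lemma prod_Iio_prod (x : Fin m → ℝ) :
    ∏ j : Fin m, ∏ k ∈ Finset.Iio j, x k = ∏ k : Fin m, x k ^ (m - 1 - (k : ℕ)) := by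
  classical
  have h1 : ∀ j : Fin m, ∏ k ∈ Finset.Iio j, x k
      = ∏ k : Fin m, (if k < j then x k else 1) := by
    intro j
    rw [← Finset.prod_filter]
    refine Finset.prod_congr ?_ fun _ _ => rfl
    ext k; simp
  have h2 : ∀ k : Fin m, ∏ j : Fin m, (if k < j then x k else 1)
      = x k ^ (m - 1 - (k : ℕ)) := by
    intro k
    rw [← Finset.prod_filter, Finset.prod_const]
    congr 1
    rw [show Finset.filter (fun j => k < j) Finset.univ = Finset.Ioi k by ext j; simp,
      Fin.card_Ioi]
  calc ∏ j : Fin m, ∏ k ∈ Finset.Iio j, x k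
      = ∏ j : Fin m, ∏ k : Fin m, (if k < j then x k else 1) :=
        Finset.prod_congr rfl fun j _ => h1 j
    _ = ∏ k : Fin m, ∏ j : Fin m, (if k < j then x k else 1) := Finset.prod_comm
    _ = ∏ k : Fin m, x k ^ (m - 1 - (k : ℕ)) := Finset.prod_congr rfl fun k _ => h2 k


lemma A_pos {x : Fin m → ℝ} (hx : x ∈ cube' m) (j : Fin m) : 0 < A x j := by
  rw [A]
  split
  · exact one_pos
  · exact K_pos hx _

lemma K_last (x : Fin m → ℝ) (h : m - 1 < m) : K x ⟨m - 1, h⟩ = ∏ j, x j := by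
  rw [K]
  refine Finset.prod_congr ?_ fun _ _ => rfl
  ext i
  simp only [Finset.mem_Iic, Finset.mem_univ, iff_true, Fin.le_def]
  omega

lemma sqrt_factor {x : Fin m → ℝ} (hx : x ∈ cube' m) (j : Fin m) :
    Real.sqrt (A x j ^ 2 - K x j ^ 2) = A x j * Real.sqrt (1 - x j ^ 2) := by
  obtain ⟨p, hp⟩ := j
  cases p with
  | zero =>
    have hA : A x ⟨0, hp⟩ = 1 := by rw [A, dif_pos rfl]
    rw [hA, K_zero, one_pow, one_mul]
  | succ q =>
    have hA : A x ⟨q + 1, hp⟩ = K x ⟨q, by omega⟩ := by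
      rw [A, dif_neg (Nat.succ_ne_zero q)]
      rfl
    have hc : 0 < K x ⟨q, by omega⟩ := K_pos hx _
    rw [hA, K_succ x q hp,
      show K x ⟨q, by omega⟩ ^ 2 - (K x ⟨q, by omega⟩ * x ⟨q + 1, hp⟩) ^ 2
        = K x ⟨q, by omega⟩ ^ 2 * (1 - x ⟨q + 1, hp⟩ ^ 2) by ring,
      Real.sqrt_mul (sq_nonneg _), Real.sqrt_sq hc.le]

lemma cube'_measurable : MeasurableSet (cube' m) := by
  have : cube' m = Set.univ.pi (fun _ : Fin m => Set.Ioo (0:ℝ) 1) := by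
    ext x; simp [cube', Set.mem_pi]
  rw [this]
  exact MeasurableSet.univ_pi fun _ => measurableSet_Ioo

end CoVAux

open CoVAux in
theorem change_of_variables_identity (d : ℕ) (hd : 3 ≤ d) (t : ℝ) (ht : 0 < t)
    (s : ℂ) (hs : -((d : ℝ) - 1) / 2 < s.re)
    (cube : Set (Fin (d-1) → ℝ)) (hcube : cube = {x | ∀ j, x j ∈ Set.Ioo (0:ℝ) 1})
    (D : Set (Fin (d-1) → ℝ))
    (hD : D = {y | (∀ j, y j ∈ Set.Ioo (0:ℝ) 1) ∧ ∀ j k : Fin (d-1), j < k → y k < y j}) :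
    (∫ x in cube,
        ((Real.cosh t + Real.sinh t * ∏ j, x j : ℝ) : ℂ) ^ s *
          (((∏ j : Fin (d-1), x j ^ (d - 2 - (j : ℕ))) /
            (∏ j : Fin (d-1), Real.sqrt (1 - x j ^ 2)) : ℝ) : ℂ)) =
      ∫ y in D,
        ((Real.cosh t + y ⟨d - 2, by omega⟩ * Real.sinh t : ℝ) : ℂ) ^ s *
          (((∏ j : Fin (d-1), if (j : ℕ) < d - 2 then y j else 1) /
            (∏ j : Fin (d-1), Real.sqrt
              ((if h : (j : ℕ) = 0 then 1 else y ⟨(j : ℕ) - 1,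
                  Nat.lt_of_le_of_lt (Nat.sub_le _ _) j.isLt⟩) ^ 2 - y j ^ 2)) : ℝ) : ℂ) := by
  obtain ⟨n, rfl⟩ : ∃ n, d = n + 3 := ⟨d - 3, by omega⟩
  subst hcube hD
  show (∫ x in {x : Fin (n+2) → ℝ | ∀ j, x j ∈ Set.Ioo (0:ℝ) 1},
        ((Real.cosh t + Real.sinh t * ∏ j, x j : ℝ) : ℂ) ^ s *
          (((∏ j : Fin (n+2), x j ^ (n + 1 - (j : ℕ))) /
            (∏ j : Fin (n+2), Real.sqrt (1 - x j ^ 2)) : ℝ) : ℂ)) =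
      ∫ y in {y : Fin (n+2) → ℝ |
          (∀ j, y j ∈ Set.Ioo (0:ℝ) 1) ∧ ∀ j k : Fin (n+2), j < k → y k < y j},
        ((Real.cosh t + y ⟨n + 1, by omega⟩ * Real.sinh t : ℝ) : ℂ) ^ s *
          (((∏ j : Fin (n+2), if (j : ℕ) < n + 1 then y j else 1) /
            (∏ j : Fin (n+2), Real.sqrt
              ((if h : (j : ℕ) = 0 then 1 else y ⟨(j : ℕ) - 1,
                  Nat.lt_of_le_of_lt (Nat.sub_le _ _) j.isLt⟩) ^ 2 - y j ^ 2)) : ℝ) : ℂ)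
  have hcube' : {x : Fin (n+2) → ℝ | ∀ j, x j ∈ Set.Ioo (0:ℝ) 1} = cube' (n+2) := rfl
  have hDK : {y : Fin (n+2) → ℝ |
      (∀ j, y j ∈ Set.Ioo (0:ℝ) 1) ∧ ∀ j k : Fin (n+2), j < k → y k < y j}
      = K '' cube' (n+2) := K_image.symm
  rw [hcube', hDK,
    MeasureTheory.integral_image_eq_integral_abs_det_fderiv_smul volume cube'_measurable
      (fun x _ => (hasFDerivAt_K x).hasFDerivWithinAt) K_injOn]
  refine MeasureTheory.setIntegral_congr_fun cube'_measurable fun x hx => ?_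
  -- pointwise identity
  have hm : (0:ℕ) < n + 2 := by omega
  have hAdef : ∀ j : Fin (n+2),
      (if h : (j : ℕ) = 0 then (1:ℝ) else K x ⟨(j : ℕ) - 1,
        Nat.lt_of_le_of_lt (Nat.sub_le _ _) j.isLt⟩) = A x j := fun _ => rfl
  have hdet : (L x).det = ∏ j : Fin (n+2), A x j := by
    rw [det_L]
    exact Finset.prod_congr rfl fun j _ => prod_Iio_eq_A x j
  have hPpos : 0 < ∏ j : Fin (n+2), A x j := Finset.prod_pos fun j _ => A_pos hx j
  have hQpos : 0 < ∏ j : Fin (n+2), Real.sqrt (1 - x j ^ 2) := by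
    refine Finset.prod_pos fun j _ => Real.sqrt_pos.2 ?_
    have h1 := (hx j).1
    have h2 := (hx j).2
    nlinarith
  have hnum : ∏ j : Fin (n+2), x j ^ (n + 1 - (j : ℕ)) = ∏ j : Fin (n+2), A x j := by
    have h := prod_Iio_prod x
    simp only [show n + 2 - 1 = n + 1 from rfl] at h
    rw [← h]
    exact Finset.prod_congr rfl fun j _ => prod_Iio_eq_A x j
  have hif : (∏ j : Fin (n+2), if (j : ℕ) < n + 1 then K x j else 1)
      = ∏ j : Fin (n+2), A x j := by
    have h1 := prod_if_range x hm
    have h2 := prod_A_range x hm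
    simp only [show n + 2 - 1 = n + 1 from rfl] at h1 h2
    rw [h1, ← h2]
  have hsqrt : (∏ j : Fin (n+2), Real.sqrt
        ((if h : (j : ℕ) = 0 then 1 else K x ⟨(j : ℕ) - 1,
          Nat.lt_of_le_of_lt (Nat.sub_le _ _) j.isLt⟩) ^ 2 - K x j ^ 2))
      = (∏ j : Fin (n+2), A x j) * ∏ j : Fin (n+2), Real.sqrt (1 - x j ^ 2) := by
    simp only [hAdef]
    rw [← Finset.prod_mul_distrib]
    exact Finset.prod_congr rfl fun j _ => sqrt_factor hx j
  have hlast : K x ⟨n + 1, by omega⟩ = ∏ j, x j := K_last x (by omega)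
  set P := ∏ j : Fin (n+2), A x j with hP
  set Q := ∏ j : Fin (n+2), Real.sqrt (1 - x j ^ 2) with hQ
  rw [hlast, hnum, hif, hsqrt, hdet, abs_of_pos hPpos, mul_comm (Real.sinh t) (∏ j, x j),
    Complex.real_smul]
  have hPne : (P:ℂ) ≠ 0 := Complex.ofReal_ne_zero.2 (ne_of_gt hPpos)
  have hQne : (Q:ℂ) ≠ 0 := Complex.ofReal_ne_zero.2 (ne_of_gt hQpos)
  push_cast
  rw [div_mul_eq_div_div]
  field_simp
end
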